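/- Let $G_m$ be a bounded Vilenkin group with Haar probability measure $\mu$, and let $0 < p \leq 1$. Then there exists a constant $c_p$ (depending only on $p$ and $\lambda = \sup_j m_j$) such that for every $N \geq 1$ and every choice of digits $n_j$, $\int_{G_m \setminus I_N} \left|\sum_{j=0}^{N-1} D_{M_j}(x)\sum_{u=m_j-n_j}^{m_j-1} r_j(x)^u\right|^p d\mu(x) \leq c_p N^{[p]}$, where $[p]$ is the integer part of $p$ (so the bound is $c_p$ for $0<p<1$ and $c\,N$ for $p=1$). -/

import Mathlib

open MeasureTheory Finset
open scoped ENNReal NNReal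

noncomputable section

/-- Generalized number system: `M 0 = 1`, `M (k+1) = m k * M k`. -/
def Mgen (m : ℕ → ℕ) : ℕ → ℕ
  | 0 => 1
  | k + 1 => m k * Mgen m k

/-- `j`-th digit of `n` in the generalized number system based on `m`. -/
def digit (m : ℕ → ℕ) (n j : ℕ) : ℕ := (n / Mgen m j) % m j

/-- `δ_j(n) = sign (n_j)`. -/
def del (m : ℕ → ℕ) (n j : ℕ) : ℕ := if digit m n j ≠ 0 then 1 else 0

/-- Variation function `v(n) = ∑_{j=1}^∞ |δ_{j+1} - δ_j| + δ_0`. -/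
def vvar (m : ℕ → ℕ) (n : ℕ) : ℕ :=
  (∑' j : ℕ, if del m n (j + 2) ≠ del m n (j + 1) then 1 else 0) + del m n 0

/-- The Vilenkin group: complete direct product of the cyclic groups `ZMod (m k)`. -/
abbrev Gm (m : ℕ → ℕ) := ∀ k : ℕ, ZMod (m k)

instance (m : ℕ → ℕ) (k : ℕ) : MeasurableSpace (ZMod (m k)) := ⊤

/-- Generalized Rademacher functions `r_k(x) = exp(2π i x_k / m_k)`. -/
def rad (m : ℕ → ℕ) (k : ℕ) (x : Gm m) : ℂ :=
  Complex.exp (2 * Real.pi * Complex.I * ((x k).val : ℂ) / (m k : ℂ))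

/-- Vilenkin functions `ψ_n = ∏_k r_k^{n_k}` (finite product: digits vanish for `k > n`). -/
def psi (m : ℕ → ℕ) (n : ℕ) (x : Gm m) : ℂ :=
  ∏ k ∈ Finset.range (n + 1), rad m k x ^ digit m n k

/-- Vilenkin-Dirichlet kernels `D_n = ∑_{k<n} ψ_k`. -/
def Dker (m : ℕ → ℕ) (n : ℕ) (x : Gm m) : ℂ :=
  ∑ k ∈ Finset.range n, psi m k x

/-- `I_N`: the subgroup of elements whose first `N` coordinates vanish. -/
def Icyl (m : ℕ → ℕ) (N : ℕ) : Set (Gm m) := {x | ∀ i < N, x i = 0}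

variable {m : ℕ → ℕ}

lemma Mgen_pos (hm : ∀ k, 2 ≤ m k) (j : ℕ) : 0 < Mgen m j := by
  induction j with
  | zero => simp [Mgen]
  | succ k ih => exact Nat.mul_pos (lt_of_lt_of_le (by norm_num) (hm k)) ih

lemma two_pow_le_Mgen (hm : ∀ k, 2 ≤ m k) (j : ℕ) : 2 ^ j ≤ Mgen m j := by
  induction j with
  | zero => simp [Mgen]
  | succ k ih =>
    calc 2 ^ (k+1) = 2 * 2 ^ k := by ring
    _ ≤ m k * Mgen m k := Nat.mul_le_mul (hm k) ih
    _ = Mgen m (k+1) := rfl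

lemma Mgen_dvd (hm : ∀ k, 2 ≤ m k) {i j : ℕ} (h : i ≤ j) : Mgen m i ∣ Mgen m j := by
  induction j with
  | zero => simpa using (Nat.le_zero.mp h) ▸ dvd_refl _
  | succ k ih =>
    rcases Nat.lt_or_ge i (k+1) with hl | hg
    · exact (ih (Nat.lt_succ_iff.mp hl)).mul_left _
    · have : i = k + 1 := le_antisymm h hg
      exact this ▸ dvd_refl _

lemma digit_eq_zero_of_lt (hm : ∀ k, 2 ≤ m k) {n j i : ℕ} (hn : n < Mgen m j) (hji : j ≤ i) :
    digit m n i = 0 := by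
  have : n < Mgen m i := lt_of_lt_of_le hn (Nat.le_of_dvd (Mgen_pos hm i) (Mgen_dvd hm hji))
  simp [digit, Nat.div_eq_of_lt this]

lemma digit_add_mul_lo (hm : ∀ k, 2 ≤ m k) {j i : ℕ} (hij : i < j) (q r : ℕ) :
    digit m (q * Mgen m j + r) i = digit m r i := by
  obtain ⟨E, hE⟩ : Mgen m (i+1) ∣ Mgen m j := Mgen_dvd hm hij
  have hMi : 0 < Mgen m i := Mgen_pos hm i
  have h1 : q * Mgen m j + r = r + (q * E * m i) * Mgen m i := by
    rw [hE]; simp [Mgen]; ring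
  rw [digit, h1, Nat.add_mul_div_right _ _ hMi, Nat.add_mul_mod_self_right]
  rfl

lemma digit_add_mul_hi (hm : ∀ k, 2 ≤ m k) {j q r : ℕ} (hq : q < m j) (hr : r < Mgen m j) :
    digit m (q * Mgen m j + r) j = q := by
  rw [digit, add_comm, Nat.add_mul_div_right _ _ (Mgen_pos hm j), Nat.div_eq_of_lt hr,
    zero_add, Nat.mod_eq_of_lt hq]

lemma sum_prod_digit (hm : ∀ k, 2 ≤ m k) (f : ℕ → ℂ) (j : ℕ) :
    ∑ k ∈ Finset.range (Mgen m j), ∏ i ∈ Finset.range j, f i ^ digit m k i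
      = ∏ i ∈ Finset.range j, ∑ a ∈ Finset.range (m i), f i ^ a := by
  induction j with
  | zero => simp [Mgen]
  | succ j ih =>
    have hM : 0 < Mgen m j := Mgen_pos hm j
    have key : ∑ k ∈ Finset.range (Mgen m (j+1)), ∏ i ∈ Finset.range (j+1), f i ^ digit m k i
        = ∑ qr ∈ Finset.range (m j) ×ˢ Finset.range (Mgen m j),
            ∏ i ∈ Finset.range (j+1), f i ^ digit m (qr.1 * Mgen m j + qr.2) i := by
      refine Finset.sum_nbij' (fun k => (k / Mgen m j, k % Mgen m j))
        (fun qr => qr.1 * Mgen m j + qr.2) ?_ ?_ ?_ ?_ ?_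
      · intro k hk
        simp only [Finset.mem_range, Mgen] at hk ⊢
        simp only [Finset.mem_product, Finset.mem_range]
        exact ⟨Nat.div_lt_of_lt_mul (by rwa [mul_comm] at hk), Nat.mod_lt _ hM⟩
      · intro qr hqr
        simp only [Finset.mem_product, Finset.mem_range] at hqr
        simp only [Finset.mem_range, Mgen]
        calc qr.1 * Mgen m j + qr.2 < qr.1 * Mgen m j + Mgen m j := by omega
        _ = (qr.1 + 1) * Mgen m j := by ring
        _ ≤ m j * Mgen m j := Nat.mul_le_mul_right _ (by omega)
      · intro k hk; simp only []; rw [mul_comm, Nat.div_add_mod]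
      · intro qr hqr
        simp only [Finset.mem_product, Finset.mem_range] at hqr
        ext
        · simp [Nat.add_mul_div_left _ _ hM, Nat.div_eq_of_lt hqr.2, Nat.mul_div_cancel _ hM,
            Nat.add_div_right, Nat.mul_add_div hM, Nat.div_eq_of_lt hqr.2]
          rw [Nat.add_comm, Nat.add_mul_div_right _ _ hM, Nat.div_eq_of_lt hqr.2, Nat.zero_add]
        · simp [Nat.add_mul_mod_self_left, Nat.mul_add_mod]
          rw [Nat.mod_eq_of_lt hqr.2]
      · intro k hk; simp only []; rw [mul_comm, Nat.div_add_mod]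
    rw [key, Finset.sum_product, Finset.prod_range_succ]
    have : ∀ q ∈ Finset.range (m j), ∀ r ∈ Finset.range (Mgen m j),
        ∏ i ∈ Finset.range (j+1), f i ^ digit m (q * Mgen m j + r) i
          = (∏ i ∈ Finset.range j, f i ^ digit m r i) * f j ^ q := by
      intro q hq r hr
      rw [Finset.prod_range_succ,
        digit_add_mul_hi hm (Finset.mem_range.mp hq) (Finset.mem_range.mp hr)]
      congr 1
      exact Finset.prod_congr rfl fun i hi =>
        by rw [digit_add_mul_lo hm (Finset.mem_range.mp hi)]
    calc ∑ q ∈ Finset.range (m j), ∑ r ∈ Finset.range (Mgen m j),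
          ∏ i ∈ Finset.range (j+1), f i ^ digit m (q * Mgen m j + r) i
        = ∑ q ∈ Finset.range (m j), ∑ r ∈ Finset.range (Mgen m j),
            (∏ i ∈ Finset.range j, f i ^ digit m r i) * f j ^ q := by
          exact Finset.sum_congr rfl fun q hq => Finset.sum_congr rfl fun r hr => this q hq r hr
    _ = (∑ r ∈ Finset.range (Mgen m j), ∏ i ∈ Finset.range j, f i ^ digit m r i)
          * ∑ q ∈ Finset.range (m j), f j ^ q := by
        rw [Finset.sum_comm, ← Finset.sum_mul_sum]
    _ = _ := by rw [ih]
variable {m : ℕ → ℕ}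

lemma psi_eq_of_lt (hm : ∀ k, 2 ≤ m k) {k j : ℕ} (hk : k < Mgen m j) (x : Gm m) :
    psi m k x = ∏ i ∈ Finset.range j, rad m i x ^ digit m k i := by
  have h1 : ∀ i, k < i → digit m k i = 0 := by
    intro i hi
    exact digit_eq_zero_of_lt hm (m := m) (j := i)
      (lt_of_lt_of_le (lt_of_lt_of_le hi (Nat.lt_two_pow_self (n := i)).le) (two_pow_le_Mgen hm i)) le_rfl
  set L := max (k+1) j with hL
  have e1 : psi m k x = ∏ i ∈ Finset.range L, rad m i x ^ digit m k i := by
    refine Finset.prod_subset (Finset.range_subset_range.mpr (le_max_left _ _)) ?_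
    intro i hi hni
    rw [h1 i (by simp at hi hni; omega)]
    simp
  have e2 : ∏ i ∈ Finset.range j, rad m i x ^ digit m k i
      = ∏ i ∈ Finset.range L, rad m i x ^ digit m k i := by
    refine Finset.prod_subset (Finset.range_subset_range.mpr (le_max_right _ _)) ?_
    intro i hi hni
    rw [digit_eq_zero_of_lt hm hk (by simp at hi hni; omega)]
    simp
  rw [e1, e2]

lemma rad_pow_card_eq_one (hm : ∀ k, 2 ≤ m k) (k : ℕ) (x : Gm m) :
    rad m k x ^ (m k) = 1 := by
  have hmk : (m k : ℂ) ≠ 0 := Nat.cast_ne_zero.mpr (by have := hm k; omega)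
  rw [rad, ← Complex.exp_nat_mul]
  rw [show (m k : ℂ) * (2 * Real.pi * Complex.I * ((x k).val : ℂ) / (m k : ℂ))
      = ((x k).val : ℂ) * (2 * Real.pi * Complex.I) by field_simp]
  rw [Complex.exp_nat_mul, Complex.exp_two_pi_mul_I, one_pow]

lemma rad_ne_one (hm : ∀ k, 2 ≤ m k) {k : ℕ} {x : Gm m} (hx : x k ≠ 0) :
    rad m k x ≠ 1 := by
  have : NeZero (m k) := ⟨by have := hm k; omega⟩
  set v := (x k).val with hv
  have hv0 : v ≠ 0 := fun h => hx ((ZMod.val_eq_zero _).mp h)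
  have hvlt : v < m k := ZMod.val_lt (x k)
  intro h
  rw [rad, Complex.exp_eq_one_iff] at h
  obtain ⟨n, hn⟩ := h
  have hmk : (m k : ℂ) ≠ 0 := Nat.cast_ne_zero.mpr (by have := hm k; omega)
  have h2 : (2 * Real.pi * Complex.I : ℂ) ≠ 0 := by
    simp [Real.pi_ne_zero, Complex.I_ne_zero]
  have h3 : (v : ℂ) = (n : ℂ) * (m k : ℂ) := by
    refine mul_left_cancel₀ h2 ?_
    have : 2 * (Real.pi : ℂ) * Complex.I * (v : ℂ) = (n : ℂ) * (2 * Real.pi * Complex.I) * (m k : ℂ) := by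
      field_simp at hn
      rw [← hv] at hn
      linear_combination (2 * (Real.pi : ℂ) * Complex.I) * hn
    linear_combination this
  have h4 : (v : ℤ) = n * (m k : ℤ) := by exact_mod_cast h3
  have hm0 : (0:ℤ) < (m k : ℤ) := by exact_mod_cast (by omega : 0 < m k)
  have hv0' : (0:ℤ) < (v : ℤ) := by exact_mod_cast Nat.pos_of_ne_zero hv0
  have hvlt' : (v : ℤ) < (m k : ℤ) := by exact_mod_cast hvlt
  rcases le_or_gt n 0 with h5 | h5
  · nlinarith
  · have : (1:ℤ) ≤ n := h5
    nlinarith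

lemma geom_rad_zero (hm : ∀ k, 2 ≤ m k) {k : ℕ} {x : Gm m} (hx : x k ≠ 0) :
    ∑ a ∈ Finset.range (m k), rad m k x ^ a = 0 := by
  rw [geom_sum_eq (rad_ne_one hm hx), rad_pow_card_eq_one hm, sub_self, zero_div]

lemma Mgen_eq_prod (j : ℕ) : Mgen m j = ∏ i ∈ Finset.range j, m i := by
  induction j with
  | zero => simp [Mgen]
  | succ j ih => rw [Finset.prod_range_succ, Mgen, ih, mul_comm]

/-- Paley lemma: D_{M_j} = M_j · 1_{I_j}. -/
lemma Dker_Mgen_eq (hm : ∀ k, 2 ≤ m k) (j : ℕ) (x : Gm m) :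
    Dker m (Mgen m j) x = if (∀ i < j, x i = 0) then (Mgen m j : ℂ) else 0 := by
  have e : Dker m (Mgen m j) x
      = ∏ i ∈ Finset.range j, ∑ a ∈ Finset.range (m i), rad m i x ^ a := by
    rw [Dker, ← sum_prod_digit hm (fun i => rad m i x) j]
    exact Finset.sum_congr rfl fun k hk => psi_eq_of_lt hm (Finset.mem_range.mp hk) x
  rw [e]
  split_ifs with hI
  · rw [Mgen_eq_prod]
    push_cast
    refine Finset.prod_congr rfl fun i hi => ?_
    have hx : rad m i x = 1 := by
      rw [rad, hI i (Finset.mem_range.mp hi)]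
      simp
    rw [hx]
    simp
  · push_neg at hI
    obtain ⟨i0, hi0, hx0⟩ := hI
    exact Finset.prod_eq_zero (Finset.mem_range.mpr hi0) (geom_rad_zero hm hx0)
variable {m : ℕ → ℕ}

lemma norm_rad_eq_one (hm : ∀ k, 2 ≤ m k) (k : ℕ) (x : Gm m) : ‖rad m k x‖ = 1 := by
  have h := congrArg (fun z => ‖z‖) (rad_pow_card_eq_one hm k x)
  simp only [norm_pow, norm_one] at h
  have hk : m k ≠ 0 := by have := hm k; omega
  have hnn := norm_nonneg (rad m k x)
  rcases lt_trichotomy ‖rad m k x‖ 1 with h1 | h1 | h1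
  · exfalso
    have := pow_lt_one₀ hnn h1 hk
    rw [h] at this; exact lt_irrefl _ this
  · exact h1
  · exfalso
    have := one_lt_pow₀ h1 hk
    rw [h] at this; exact lt_irrefl _ this

lemma sum_Mgen_le (hm : ∀ k, 2 ≤ m k) (s : ℕ) :
    ∑ j ∈ Finset.range (s + 1), Mgen m j ≤ 2 * Mgen m s := by
  induction s with
  | zero => simp [Mgen]
  | succ s ih =>
    rw [Finset.sum_range_succ]
    have h2 : 2 * Mgen m s ≤ Mgen m (s+1) := Nat.mul_le_mul_right _ (hm s)
    calc ∑ j ∈ Finset.range (s+1), Mgen m j + Mgen m (s+1)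
        ≤ 2 * Mgen m s + Mgen m (s+1) := by omega
    _ ≤ 2 * Mgen m (s+1) := by omega

/-- on a bounded Vilenkin group with normalized Haar measure `μ`
(characterized by `μ(I_N(x)) = 1/M_N`), for `0 < p ≤ 1` there is a constant `c_p`
(depending only on `p` and `λ`) such that for all `N ≥ 1` and digits `n_j < m_j`,
`∫_{G_m ∖ I_N} |∑_{j<N} D_{M_j} ∑_{u=m_j-n_j}^{m_j-1} r_j^u|^p dμ ≤ c_p N^{[p]}`. -/
theorem Dirichlet_partial_Lp_bound (lam : ℕ) (p : ℝ) (hp0 : 0 < p) (hp1 : p ≤ 1) :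
    ∃ c : ℝ, 0 < c ∧
      ∀ (m : ℕ → ℕ), (∀ k, 2 ≤ m k ∧ m k ≤ lam) →
        ∀ (μ : MeasureTheory.Measure (Gm m)), MeasureTheory.IsProbabilityMeasure μ →
          (∀ (N : ℕ) (x : Gm m), μ {y | ∀ i < N, y i = x i} = 1 / (Mgen m N : ℝ≥0∞)) →
          ∀ (N : ℕ), 1 ≤ N → ∀ (nd : ℕ → ℕ), (∀ j, nd j < m j) →
            ∫⁻ x in (Icyl m N)ᶜ,
                (‖∑ j ∈ Finset.range N,
                    Dker m (Mgen m j) x *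
                      ∑ u ∈ Finset.Ico (m j - nd j) (m j), rad m j x ^ u‖₊ : ℝ≥0∞) ^ p
              ∂μ ≤ ENNReal.ofReal (c * (N : ℝ) ^ (⌊p⌋₊ : ℕ)) := by

  classical
  -- geometric constant
  set q : ℝ≥0∞ := (2 : ℝ≥0∞) ^ (p - 1) with hq
  have hqle : q ≤ 1 := by
    have := ENNReal.rpow_le_rpow_of_exponent_le (x := 2) (by norm_num) (by linarith : p - 1 ≤ 0)
    simpa using this
  set K : ℝ≥0∞ := (1 - q)⁻¹ with hK
  have hKne : p < 1 → K ≠ ∞ := by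
    intro hp
    have hqlt : q < 1 := by
      have := ENNReal.rpow_lt_rpow_of_exponent_lt (x := 2) (by norm_num) (by norm_num)
        (by linarith : p - 1 < 0)
      simpa using this
    simp only [hK, ne_eq, ENNReal.inv_eq_top]
    exact fun h => absurd (tsub_eq_zero_iff_le.mp h) (not_le.mpr hqlt)
  set c : ℝ := 2 * lam * (if p < 1 then K.toReal else 1) + 2 * lam + 1 with hc
  have hc0 : 0 < c := by
    have : (0:ℝ) ≤ 2 * lam * (if p < 1 then K.toReal else 1) := by
      positivity
    nlinarith [this]
  refine ⟨c, hc0, ?_⟩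
  intro m hm' μ hμprob hμ N hN nd hnd
  have hm : ∀ k, 2 ≤ m k := fun k => (hm' k).1
  have hlam : 2 ≤ lam := le_trans (hm 0) (hm' 0).2
  -- the integrand
  set f : Gm m → ℂ := fun x => ∑ j ∈ Finset.range N,
      Dker m (Mgen m j) x * ∑ u ∈ Finset.Ico (m j - nd j) (m j), rad m j x ^ u with hf
  set g : Gm m → ℝ≥0∞ := fun x => (‖f x‖₊ : ℝ≥0∞) ^ p with hg
  -- the shell sets
  set S : ℕ → Set (Gm m) := fun s => {x | (∀ i < s, x i = 0) ∧ x s ≠ 0} with hS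
  have hsub : (Icyl m N)ᶜ ⊆ ⋃ (s : Fin N), S s.1 := by
    intro x hx
    simp only [Icyl, Set.mem_compl_iff, Set.mem_setOf_eq, not_forall] at hx
    obtain ⟨i, hiN, hxi⟩ := hx
    have hex : ∃ i, x i ≠ 0 := ⟨i, hxi⟩
    have hfind : Nat.find hex < N := lt_of_le_of_lt (Nat.find_min' hex hxi) hiN
    refine Set.mem_iUnion.mpr ⟨⟨Nat.find hex, hfind⟩, ?_⟩
    refine ⟨fun i' hi' => ?_, Nat.find_spec hex⟩
    by_contra h
    exact absurd hi' (not_lt.mpr (Nat.find_min' hex h))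
  -- pointwise bound on each shell
  have hbd : ∀ s < N, ∀ x ∈ S s, g x ≤ ((2 * lam * Mgen m s : ℕ) : ℝ≥0∞) ^ p := by
    intro s hsN x hx
    have hnorm : ‖f x‖ ≤ ((2 * lam * Mgen m s : ℕ) : ℝ) := by
      calc ‖f x‖ ≤ ∑ j ∈ Finset.range N,
          ‖Dker m (Mgen m j) x * ∑ u ∈ Finset.Ico (m j - nd j) (m j), rad m j x ^ u‖ :=
            norm_sum_le _ _
      _ ≤ ∑ j ∈ Finset.range N, (if j ≤ s then ((Mgen m j : ℝ) * lam) else 0) := by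
          refine Finset.sum_le_sum fun j hj => ?_
          rw [norm_mul, Dker_Mgen_eq hm]
          by_cases hcond : ∀ i < j, x i = 0
          · have hjs : j ≤ s := by
              by_contra hjs
              exact hx.2 (hcond s (by omega))
            rw [if_pos hcond, if_pos hjs]
            have h1 : ‖(Mgen m j : ℂ)‖ = (Mgen m j : ℝ) := by
              simp [Complex.norm_natCast]
            rw [h1]
            refine mul_le_mul_of_nonneg_left ?_ (Nat.cast_nonneg _)
            calc ‖∑ u ∈ Finset.Ico (m j - nd j) (m j), rad m j x ^ u‖
                ≤ ∑ u ∈ Finset.Ico (m j - nd j) (m j), ‖rad m j x ^ u‖ := norm_sum_le _ _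
            _ = ∑ u ∈ Finset.Ico (m j - nd j) (m j), 1 := by
                refine Finset.sum_congr rfl fun u _ => ?_
                rw [norm_pow, norm_rad_eq_one hm, one_pow]
            _ = ((Finset.Ico (m j - nd j) (m j)).card : ℝ) := by simp
            _ ≤ (lam : ℝ) := by
                rw [Nat.card_Ico]
                exact_mod_cast le_trans (by omega) (hm' j).2
          · rw [if_neg hcond]
            simp only [norm_zero, zero_mul]
            split_ifs <;> positivity
      _ = ∑ j ∈ Finset.filter (· ≤ s) (Finset.range N), ((Mgen m j : ℝ) * lam) :=
          (Finset.sum_filter _ _).symm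
      _ ≤ ∑ j ∈ Finset.range (s + 1), ((Mgen m j : ℝ) * lam) := by
          refine Finset.sum_le_sum_of_subset_of_nonneg ?_ (fun j _ _ => by positivity)
          intro j hj
          simp only [Finset.mem_filter, Finset.mem_range] at hj ⊢
          omega
      _ = (∑ j ∈ Finset.range (s + 1), (Mgen m j : ℝ)) * lam := by
          rw [Finset.sum_mul]
      _ ≤ (2 * (Mgen m s : ℝ)) * lam := by
          refine mul_le_mul_of_nonneg_right ?_ (Nat.cast_nonneg _)
          have := sum_Mgen_le hm s
          push_cast
          exact_mod_cast (by exact_mod_cast this : (∑ j ∈ Finset.range (s+1), Mgen m j : ℝ) ≤ 2 * (Mgen m s : ℝ))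
      _ = ((2 * lam * Mgen m s : ℕ) : ℝ) := by push_cast; ring
    have h1 : (‖f x‖₊ : ℝ≥0∞) ≤ ((2 * lam * Mgen m s : ℕ) : ℝ≥0∞) := by
      rw [← enorm_eq_nnnorm, ← ofReal_norm]
      calc ENNReal.ofReal ‖f x‖ ≤ ENNReal.ofReal ((2 * lam * Mgen m s : ℕ) : ℝ) :=
        ENNReal.ofReal_le_ofReal hnorm
      _ = _ := ENNReal.ofReal_natCast _
    exact ENNReal.rpow_le_rpow h1 hp0.le
  -- integral over shells
  have hμS : ∀ s : ℕ, μ (S s) ≤ 1 / (Mgen m s : ℝ≥0∞) := by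
    intro s
    calc μ (S s) ≤ μ {y : Gm m | ∀ i < s, y i = (0 : Gm m) i} :=
      measure_mono fun x hx => hx.1
    _ = 1 / (Mgen m s : ℝ≥0∞) := hμ s 0
  have hshell : ∀ s < N, ∫⁻ x in S s, g x ∂μ
      ≤ ((2 * lam * Mgen m s : ℕ) : ℝ≥0∞) ^ p * (1 / (Mgen m s : ℝ≥0∞)) := by
    intro s hsN
    calc ∫⁻ x in S s, g x ∂μ
        ≤ ∫⁻ _ in S s, ((2 * lam * Mgen m s : ℕ) : ℝ≥0∞) ^ p ∂μ :=
          setLIntegral_mono measurable_const (hbd s hsN)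
    _ = ((2 * lam * Mgen m s : ℕ) : ℝ≥0∞) ^ p * μ (S s) := setLIntegral_const _ _
    _ ≤ _ := mul_le_mul_right (hμS s) _
  -- term bound
  have hterm : ∀ s : ℕ, ((2 * lam * Mgen m s : ℕ) : ℝ≥0∞) ^ p * (1 / (Mgen m s : ℝ≥0∞))
      ≤ (2 * lam : ℝ≥0∞) * q ^ s := by
    intro s
    have hM0 : ((Mgen m s : ℝ≥0∞)) ≠ 0 := by
      exact_mod_cast (Mgen_pos hm s).ne'
    have hMtop : ((Mgen m s : ℝ≥0∞)) ≠ ∞ := ENNReal.natCast_ne_top _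
    have e1 : ((2 * lam * Mgen m s : ℕ) : ℝ≥0∞) = (2 * lam : ℝ≥0∞) * (Mgen m s : ℝ≥0∞) := by
      push_cast; ring
    rw [e1, ENNReal.mul_rpow_of_nonneg _ _ hp0.le]
    have h2 : (2 * (lam:ℝ≥0∞)) ^ p ≤ 2 * lam := by
      have h1le : (1:ℝ≥0∞) ≤ 2 * lam := by
        calc (1:ℝ≥0∞) ≤ 2 := by norm_num
        _ ≤ 2 * lam := le_mul_of_one_le_right (by norm_num)
              (by exact_mod_cast Nat.one_le_iff_ne_zero.mpr (by omega))
      calc (2 * (lam:ℝ≥0∞)) ^ p ≤ (2 * (lam:ℝ≥0∞)) ^ (1:ℝ) :=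
        ENNReal.rpow_le_rpow_of_exponent_le h1le hp1
      _ = 2 * lam := ENNReal.rpow_one _
    have h3 : (Mgen m s : ℝ≥0∞) ^ p * (1 / (Mgen m s : ℝ≥0∞)) = (Mgen m s : ℝ≥0∞) ^ (p - 1) := by
      rw [one_div, ← ENNReal.rpow_neg_one, ← ENNReal.rpow_add _ _ hM0 hMtop,
        show p + -1 = p - 1 by ring]
    have h4 : (Mgen m s : ℝ≥0∞) ^ (p - 1) ≤ q ^ s := by
      have hle : ((2:ℝ≥0∞) ^ s) ≤ (Mgen m s : ℝ≥0∞) := by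
        exact_mod_cast (by exact_mod_cast two_pow_le_Mgen hm s :
          ((2^s : ℕ) : ℝ≥0∞) ≤ (Mgen m s : ℝ≥0∞))
      have e2 : q ^ s = ((2:ℝ≥0∞) ^ s) ^ (p - 1) := by
        rw [hq, ← ENNReal.rpow_natCast ((2:ℝ≥0∞) ^ (p-1)) s, ← ENNReal.rpow_mul,
          mul_comm, ENNReal.rpow_mul, ENNReal.rpow_natCast]
      rw [e2, show p - 1 = -(1 - p) by ring, ENNReal.rpow_neg, ENNReal.rpow_neg]
      exact ENNReal.inv_le_inv.mpr (ENNReal.rpow_le_rpow hle (by linarith))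
    calc (2 * (lam:ℝ≥0∞)) ^ p * (Mgen m s : ℝ≥0∞) ^ p * (1 / (Mgen m s : ℝ≥0∞))
        = (2 * (lam:ℝ≥0∞)) ^ p * ((Mgen m s : ℝ≥0∞) ^ p * (1 / (Mgen m s : ℝ≥0∞))) := by ring
    _ ≤ (2 * lam) * q ^ s := by
        rw [h3]
        exact mul_le_mul' h2 h4
  -- assemble
  have hmain : ∫⁻ x in (Icyl m N)ᶜ, g x ∂μ ≤ ∑ s ∈ Finset.range N, (2 * lam : ℝ≥0∞) * q ^ s := by
    calc ∫⁻ x in (Icyl m N)ᶜ, g x ∂μ ≤ ∫⁻ x in ⋃ (s : Fin N), S s.1, g x ∂μ :=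
      lintegral_mono_set hsub
    _ ≤ ∑' (s : Fin N), ∫⁻ x in S s.1, g x ∂μ := lintegral_iUnion_le _ _
    _ = ∑ s ∈ Finset.univ, ∫⁻ x in S (s : Fin N).1, g x ∂μ := tsum_fintype _
    _ ≤ ∑ s ∈ Finset.univ (α := Fin N), (2 * lam : ℝ≥0∞) * q ^ (s.1) := by
        refine Finset.sum_le_sum fun s _ => ?_
        exact le_trans (hshell s.1 s.2) (hterm s.1)
    _ = ∑ s ∈ Finset.range N, (2 * lam : ℝ≥0∞) * q ^ s := by
        rw [← Fin.sum_univ_eq_sum_range (fun s => (2 * lam : ℝ≥0∞) * q ^ s) N]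
  by_cases hplt : p < 1
  · -- floor p = 0
    have hfloor : ⌊p⌋₊ = 0 := Nat.floor_eq_zero.mpr hplt
    have hsum : ∑ s ∈ Finset.range N, (2 * lam : ℝ≥0∞) * q ^ s ≤ (2 * lam : ℝ≥0∞) * K := by
      rw [← Finset.mul_sum]
      refine mul_le_mul_right ?_ _
      calc ∑ s ∈ Finset.range N, q ^ s ≤ ∑' s : ℕ, q ^ s :=
        ENNReal.sum_le_tsum _
      _ = K := ENNReal.tsum_geometric q
    have hfin : (2 * lam : ℝ≥0∞) * K ≠ ∞ :=
      ENNReal.mul_ne_top (by simp [ENNReal.mul_ne_top]) (hKne hplt)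
    refine le_trans hmain (le_trans hsum ?_)
    rw [hfloor]
    simp only [pow_zero, mul_one]
    rw [← ENNReal.ofReal_toReal hfin]
    refine ENNReal.ofReal_le_ofReal ?_
    rw [hc, if_pos hplt]
    have he : ((2 * lam : ℝ≥0∞) * K).toReal = 2 * lam * K.toReal := by
      simp [ENNReal.toReal_mul]
    rw [he]
    have h0 : (0:ℝ) ≤ 2 * lam := by positivity
    linarith
  · -- p = 1, floor = 1
    have hp1' : p = 1 := le_antisymm hp1 (not_lt.mp hplt)
    have hfloor : ⌊p⌋₊ = 1 := by rw [hp1']; simp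
    have hq1 : q = 1 := by rw [hq, hp1']; norm_num
    have hsum : ∑ s ∈ Finset.range N, (2 * lam : ℝ≥0∞) * q ^ s = (2 * lam : ℝ≥0∞) * N := by
      rw [hq1]; simp [Finset.sum_const, mul_comm]
    refine le_trans hmain ?_
    rw [hsum, hfloor, pow_one]
    have e : (2 * lam : ℝ≥0∞) * N = ENNReal.ofReal ((2 * lam : ℝ) * N) := by
      rw [ENNReal.ofReal_mul (by positivity)]
      congr 1
      · rw [ENNReal.ofReal_mul (by norm_num)]
        simp [ENNReal.ofReal_natCast]
      · simp [ENNReal.ofReal_natCast]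
    rw [e]
    refine ENNReal.ofReal_le_ofReal ?_
    have hN1 : (1:ℝ) ≤ N := by exact_mod_cast hN
    have hcge : (2 * lam : ℝ) ≤ c := by
      rw [hc]
      have : (0:ℝ) ≤ 2 * lam * (if p < 1 then K.toReal else 1) := by positivity
      linarith
    nlinarith [Nat.cast_nonneg (α := ℝ) N]
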